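/- Let (z_t), (f_t), (g_t), (h_t), (α_t) be nonnegative stochastic processes adapted to a filtration (F_t) with E[z_{t+1}|F_t] ≤ (1+f_t) z_t + g_t - α_t h_t a.s. for all t. Suppose Σ f_t < ∞ and Σ g_t < ∞ almost surely. Then (z_t) is bounded almost surely and converges almost surely to a random variable W. If additionally Σ α_t = ∞ almost surely, then liminf_{t→∞} h_t = 0 almost surely. -/

import Mathlib

/-!
Dividing by `∏_{s<t} (1 + f s)` turns the recursion into `𝔼[Z (t+1) | ℱ t] ≤ Z t + G t - A t`
with `G, A ≥ 0`, so that `Z t + ∑_{s<t} (A s - G s)` is a supermartingale. It need not be bounded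
below; multiplying `Z t` and the increments by the predictable indicator of `∑_{s<t} G s ≤ n`
gives a supermartingale bounded below by `-n`, which converges a.s. by Doob's theorem. Off a null
set this holds for every `n : ℕ`, and where `∑ G ≤ n` the indicator is identically `1`, so there
`Z` converges and `∑ A < ∞`. Since `∏ (1 + f s)` converges when `∑ f < ∞`, this transfers back
to `z` and to `α h`, and `∑ α h < ∞ = ∑ α` forces `h` below any `ε > 0` infinitely often.
-/

open MeasureTheory Filter Finset
open scoped Topology

lemma liminf_eq_zero_of_summable_mul {α h : ℕ → ℝ} (hα : ∀ t, 0 ≤ α t) (hh : ∀ t, 0 ≤ h t)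
    (hαh : Summable fun t => α t * h t) (hα_sum : ¬ Summable α) :
    liminf h atTop = 0 := by
  have hfreq : ∀ ε > 0, ∃ᶠ t in atTop, h t ≤ ε := by
    intro ε hε
    by_contra hcon
    refine hα_sum (Summable.of_norm_bounded_eventually_nat (hαh.mul_left ε⁻¹) ?_)
    filter_upwards [not_frequently.1 hcon] with t ht
    rw [Real.norm_of_nonneg (hα t), le_inv_mul_iff₀ hε]
    nlinarith [hα t]
  refine le_antisymm (le_of_forall_pos_le_add fun ε hε => ?_)
    (le_liminf_of_le (.of_frequently_le (hfreq 1 one_pos)) (.of_forall hh))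
  simpa using liminf_le_of_frequently_le (hfreq ε hε) (isBoundedUnder_of ⟨0, hh⟩)

lemma tendsto_and_summable_of_tendsto_add_sum_sub {Z A G : ℕ → ℝ} {c : ℝ} (hZ : ∀ t, 0 ≤ Z t)
    (hA : ∀ t, 0 ≤ A t) (hG : Summable G)
    (hY : Tendsto (fun t => Z t + ∑ s ∈ range t, (A s - G s)) atTop (𝓝 c)) :
    (∃ l, Tendsto Z atTop (𝓝 l)) ∧ Summable A := by
  have hYG := hY.add hG.hasSum.tendsto_sum_nat
  have hsum_A : ∀ t, ∑ s ∈ range t, A s =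
      (Z t + ∑ s ∈ range t, (A s - G s)) + ∑ s ∈ range t, G s - Z t := by
    intro t
    rw [sum_sub_distrib]
    ring
  obtain ⟨B, hB⟩ := hYG.bddAbove_range
  have hA_sum : Summable A := summable_of_sum_range_le hA fun t => by
    rw [hsum_A]
    linarith [hZ t, hB ⟨t, rfl⟩]
  refine ⟨⟨_, (hYG.sub hA_sum.hasSum.tendsto_sum_nat).congr fun t => ?_⟩, hA_sum⟩
  rw [hsum_A]
  ring

namespace MeasureTheory

variable {Ω : Type*} {m0 : MeasurableSpace Ω} {ℱ : Filtration ℕ m0} {X : ℕ → Ω → ℝ}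

lemma Adapted.measurable_sum_range (hX : Adapted ℱ X) {t u : ℕ} (htu : t ≤ u + 1) :
    Measurable[ℱ u] fun ω => ∑ s ∈ range t, X s ω :=
  Finset.measurable_sum _ fun s hs => hX.measurable_le (by simp at hs; omega)

lemma condExp_mul_le_mul_of_bound {μ : Measure Ω} [IsFiniteMeasure μ] {m : MeasurableSpace Ω}
    (hm : m ≤ m0) {u Y b : Ω → ℝ} {C : ℝ} (hu : StronglyMeasurable[m] u) (hu0 : ∀ ω, 0 ≤ u ω)
    (huC : ∀ ω, u ω ≤ C) (hY : Integrable Y μ) (hYb : μ[Y|m] ≤ᵐ[μ] b) :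
    μ[u * Y|m] ≤ᵐ[μ] u * b := by
  have hu_bound : ∀ᵐ ω ∂μ, ‖u ω‖ ≤ C :=
    ae_of_all _ fun ω => (Real.norm_of_nonneg (hu0 ω)).trans_le (huC ω)
  filter_upwards [condExp_stronglyMeasurable_mul_of_bound hm hu hY C hu_bound, hYb] with ω h1 h2
  rw [h1]
  exact mul_le_mul_of_nonneg_left h2 (hu0 ω)

lemma Supermartingale.exists_ae_tendsto_of_forall_le {μ : Measure Ω} [IsFiniteMeasure μ]
    {Y : ℕ → Ω → ℝ} (hY : Supermartingale Y ℱ μ) {c : ℝ} (hc : ∀ t ω, c ≤ Y t ω) :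
    ∀ᵐ ω ∂μ, ∃ l, Tendsto (fun t => Y t ω) atTop (𝓝 l) := by
  have hbdd : ∀ t, eLpNorm ((-Y) t) 1 μ ≤ ENNReal.ofReal (∫ ω, Y 0 ω + 2 * |c| ∂μ) := by
    intro t
    have hint := hY.integrable t
    rw [Pi.neg_apply, eLpNorm_neg, eLpNorm_one_eq_lintegral_enorm,
      ← ofReal_integral_norm_eq_lintegral_enorm hint]
    refine ENNReal.ofReal_le_ofReal ?_
    have habs : ∀ ω, ‖Y t ω‖ ≤ Y t ω + 2 * |c| := fun ω =>
      abs_le.2 ⟨by linarith [hc t ω, neg_abs_le c], by linarith [abs_nonneg c]⟩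
    have hmean : ∫ ω, Y t ω ∂μ ≤ ∫ ω, Y 0 ω ∂μ := by
      simpa using hY.setIntegral_le (Nat.zero_le t) MeasurableSet.univ
    calc ∫ ω, ‖Y t ω‖ ∂μ ≤ ∫ ω, Y t ω + 2 * |c| ∂μ :=
          integral_mono hint.norm (hint.add (integrable_const _)) habs
      _ ≤ ∫ ω, Y 0 ω + 2 * |c| ∂μ := by
          rw [integral_add hint (integrable_const _),
            integral_add (hY.integrable 0) (integrable_const _)]
          linarith
  filter_upwards [hY.neg.exists_ae_tendsto_of_bdd hbdd] with ω ⟨l, hl⟩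
  exact ⟨-l, by simpa using hl.neg⟩

end MeasureTheory

namespace RobbinsSiegmund

variable {Ω : Type*} {m0 : MeasurableSpace Ω} {μ : Measure Ω} {ℱ : Filtration ℕ m0}

structure IsAlmostSupermartingale (ℱ : Filtration ℕ m0) (μ : Measure Ω)
    (Z G A : ℕ → Ω → ℝ) : Prop where
  nonneg_Z : ∀ t ω, 0 ≤ Z t ω
  nonneg_G : ∀ t ω, 0 ≤ G t ω
  nonneg_A : ∀ t ω, 0 ≤ A t ω
  adapted_Z : Adapted ℱ Z
  adapted_G : Adapted ℱ G
  adapted_A : Adapted ℱ A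
  integrable : ∀ t, Integrable (Z t) μ
  condExp_le : ∀ t, μ[Z (t + 1)|ℱ t] ≤ᵐ[μ] Z t + G t - A t

noncomputable def cutoff (G : ℕ → Ω → ℝ) (n t : ℕ) (ω : Ω) : ℝ :=
  if ∑ s ∈ range t, G s ω ≤ n then 1 else 0

noncomputable def localized (Z G A : ℕ → Ω → ℝ) (n t : ℕ) (ω : Ω) : ℝ :=
  cutoff G n t ω * Z t ω + ∑ s ∈ range t, cutoff G n (s + 1) ω * (A s ω - G s ω)

variable {Z G A : ℕ → Ω → ℝ} {n t : ℕ} {ω : Ω}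

lemma cutoff_nonneg : 0 ≤ cutoff G n t ω := by
  unfold cutoff; split_ifs <;> norm_num

lemma cutoff_le_one : cutoff G n t ω ≤ 1 := by
  unfold cutoff; split_ifs <;> norm_num

lemma cutoff_succ_le (hG : ∀ s, 0 ≤ G s ω) : cutoff G n (t + 1) ω ≤ cutoff G n t ω := by
  unfold cutoff
  split_ifs with h₁ h₂ <;> try norm_num
  rw [sum_range_succ] at h₁
  linarith [hG t]

lemma cutoff_succ_mul_le (hG : ∀ s, 0 ≤ G s ω) (s : ℕ) : cutoff G n (s + 1) ω * G s ω ≤ n := by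
  unfold cutoff
  split_ifs with h
  · rw [one_mul]
    exact (single_le_sum (fun i _ => hG i) (self_mem_range_succ s)).trans h
  · simp

lemma sum_cutoff_succ_mul_le (hG : ∀ s, 0 ≤ G s ω) :
    ∑ s ∈ range t, cutoff G n (s + 1) ω * G s ω ≤ n := by
  induction t with
  | zero => simp
  | succ t ih =>
    by_cases h : ∑ s ∈ range (t + 1), G s ω ≤ n
    · refine le_trans (sum_le_sum fun s _ => ?_) h
      exact mul_le_of_le_one_left (hG s) cutoff_le_one
    · rw [sum_range_succ, cutoff, if_neg h, zero_mul, add_zero]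
      exact ih

lemma cutoff_eq_one_of_tsum_le (hG : ∀ s, 0 ≤ G s ω) (hsum : Summable fun s => G s ω)
    (hn : ∑' s, G s ω ≤ n) : cutoff G n t ω = 1 :=
  if_pos ((hsum.sum_le_tsum _ fun s _ => hG s).trans hn)

lemma measurable_cutoff (hG : Adapted ℱ G) {u : ℕ} (htu : t ≤ u + 1) :
    Measurable[ℱ u] (cutoff G n t) :=
  Measurable.ite (measurableSet_le (hG.measurable_sum_range htu) measurable_const)
    measurable_const measurable_const

lemma localized_eq_of_tsum_le (hG : ∀ s, 0 ≤ G s ω) (hsum : Summable fun s => G s ω)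
    (hn : ∑' s, G s ω ≤ n) :
    localized Z G A n t ω = Z t ω + ∑ s ∈ range t, (A s ω - G s ω) := by
  simp only [localized, cutoff_eq_one_of_tsum_le hG hsum hn, one_mul]

namespace IsAlmostSupermartingale

lemma ae_le_add (hS : IsAlmostSupermartingale ℱ μ Z G A) (t : ℕ) :
    ∀ᵐ ω ∂μ, A t ω ≤ Z t ω + G t ω := by
  filter_upwards [hS.condExp_le t, condExp_nonneg (μ := μ) (m := ℱ t)
    (ae_of_all _ (hS.nonneg_Z (t + 1)))] with ω h₁ h₂
  simp only [Pi.add_apply, Pi.sub_apply, Pi.zero_apply] at h₁ h₂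
  linarith

lemma neg_le_localized (hS : IsAlmostSupermartingale ℱ μ Z G A) :
    -(n : ℝ) ≤ localized Z G A n t ω :=
  calc -(n : ℝ) ≤ -∑ s ∈ range t, cutoff G n (s + 1) ω * G s ω :=
        neg_le_neg (sum_cutoff_succ_mul_le (hS.nonneg_G · ω))
    _ = ∑ s ∈ range t, -(cutoff G n (s + 1) ω * G s ω) := (sum_neg_distrib _).symm
    _ ≤ ∑ s ∈ range t, cutoff G n (s + 1) ω * (A s ω - G s ω) := sum_le_sum fun s _ => by
        have hcA : 0 ≤ cutoff G n (s + 1) ω * A s ω := mul_nonneg cutoff_nonneg (hS.nonneg_A s ω)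
        rw [mul_sub]
        linarith
    _ ≤ localized Z G A n t ω :=
        le_add_of_nonneg_left (mul_nonneg cutoff_nonneg (hS.nonneg_Z t ω))

lemma measurable_sum_cutoff_mul_sub (hS : IsAlmostSupermartingale ℱ μ Z G A) {u : ℕ}
    (htu : t ≤ u + 1) :
    Measurable[ℱ u] fun ω => ∑ s ∈ range t, cutoff G n (s + 1) ω * (A s ω - G s ω) :=
  Finset.measurable_sum _ fun s hs => by
    have hst : s + 1 ≤ t := mem_range.1 hs
    exact (measurable_cutoff hS.adapted_G (by omega)).mul
      ((hS.adapted_A.measurable_le (by omega)).sub (hS.adapted_G.measurable_le (by omega)))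

lemma adapted_localized (hS : IsAlmostSupermartingale ℱ μ Z G A) :
    Adapted ℱ (localized Z G A n) := fun t =>
  ((measurable_cutoff hS.adapted_G t.le_succ).mul (hS.adapted_Z t)).add
    (hS.measurable_sum_cutoff_mul_sub t.le_succ)

lemma integrable_cutoff_mul [IsFiniteMeasure μ] (hS : IsAlmostSupermartingale ℱ μ Z G A)
    (u : ℕ) : Integrable (cutoff G n t * Z u) μ := by
  refine (hS.integrable u).mono' ?_ (ae_of_all _ fun ω => ?_)
  · exact (((measurable_cutoff hS.adapted_G t.le_succ).mono (ℱ.le t) le_rfl).mul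
      hS.adapted_Z.measurable).aestronglyMeasurable
  · rw [Pi.mul_apply, Real.norm_eq_abs, abs_of_nonneg (mul_nonneg cutoff_nonneg (hS.nonneg_Z u ω))]
    exact mul_le_of_le_one_left (hS.nonneg_Z u ω) cutoff_le_one

lemma integrable_cutoff_mul_sub [IsFiniteMeasure μ] (hS : IsAlmostSupermartingale ℱ μ Z G A)
    (s : ℕ) : Integrable (fun ω => cutoff G n (s + 1) ω * (A s ω - G s ω)) μ := by
  refine ((hS.integrable s).add (integrable_const (n : ℝ))).mono' (g := fun ω => Z s ω + n) ?_ ?_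
  · exact (((measurable_cutoff hS.adapted_G le_rfl).mul
      ((hS.adapted_A s).sub (hS.adapted_G s))).mono (ℱ.le s) le_rfl).aestronglyMeasurable
  · filter_upwards [hS.ae_le_add s] with ω hω
    have hc0 : 0 ≤ cutoff G n (s + 1) ω := cutoff_nonneg
    have hcA : cutoff G n (s + 1) ω * A s ω ≤ cutoff G n (s + 1) ω * (Z s ω + G s ω) :=
      mul_le_mul_of_nonneg_left hω hc0
    have hcZ : cutoff G n (s + 1) ω * Z s ω ≤ Z s ω :=
      mul_le_of_le_one_left (hS.nonneg_Z s ω) cutoff_le_one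
    have hcG := cutoff_succ_mul_le (n := n) (fun i => hS.nonneg_G i ω) s
    rw [Real.norm_eq_abs, abs_le]
    constructor <;> nlinarith [mul_nonneg hc0 (hS.nonneg_A s ω), hS.nonneg_Z s ω]

lemma integrable_localized [IsFiniteMeasure μ] (hS : IsAlmostSupermartingale ℱ μ Z G A) :
    Integrable (localized Z G A n t) μ :=
  (hS.integrable_cutoff_mul t).add
    (integrable_finsetSum _ fun s _ => hS.integrable_cutoff_mul_sub s)

lemma supermartingale_localized [IsFiniteMeasure μ] (hS : IsAlmostSupermartingale ℱ μ Z G A)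
    (n : ℕ) : Supermartingale (localized Z G A n) ℱ μ := by
  refine supermartingale_nat hS.adapted_localized.stronglyAdapted
    (fun t => hS.integrable_localized) fun t => ?_
  set R : Ω → ℝ := fun ω => ∑ s ∈ range (t + 1), cutoff G n (s + 1) ω * (A s ω - G s ω)
  have hR_int : Integrable R μ :=
    integrable_finsetSum _ fun s _ => hS.integrable_cutoff_mul_sub s
  have hR : μ[R|ℱ t] = R := condExp_of_stronglyMeasurable (ℱ.le t)
    (hS.measurable_sum_cutoff_mul_sub le_rfl).stronglyMeasurable hR_int
  have hcZ : μ[cutoff G n (t + 1) * Z (t + 1)|ℱ t] ≤ᵐ[μ]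
      cutoff G n (t + 1) * (Z t + G t - A t) :=
    condExp_mul_le_mul_of_bound (ℱ.le t) (measurable_cutoff hS.adapted_G le_rfl).stronglyMeasurable
      (fun _ => cutoff_nonneg) (fun _ => cutoff_le_one) (hS.integrable (t + 1)) (hS.condExp_le t)
  have hsplit : localized Z G A n (t + 1) = cutoff G n (t + 1) * Z (t + 1) + R := rfl
  rw [hsplit]
  filter_upwards [condExp_add (hS.integrable_cutoff_mul (t + 1)) hR_int (ℱ t), hcZ] with ω h₁ h₂
  have hmono : cutoff G n (t + 1) ω * Z t ω ≤ cutoff G n t ω * Z t ω :=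
    mul_le_mul_of_nonneg_right (cutoff_succ_le (hS.nonneg_G · ω)) (hS.nonneg_Z t ω)
  simp only [Pi.add_apply, Pi.mul_apply, Pi.sub_apply, hR] at h₁ h₂
  rw [h₁]
  -- the new increment `cutoff (t + 1) * (A t - G t)` cancels the same term in the bound `h₂`
  simp only [localized, R, sum_range_succ]
  linarith

theorem ae_tendsto_and_summable [IsFiniteMeasure μ] (hS : IsAlmostSupermartingale ℱ μ Z G A) :
    ∀ᵐ ω ∂μ, Summable (fun t => G t ω) →
      (∃ l, Tendsto (fun t => Z t ω) atTop (𝓝 l)) ∧ Summable fun t => A t ω := by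
  have hconv : ∀ᵐ ω ∂μ, ∀ n : ℕ, ∃ c, Tendsto (fun t => localized Z G A n t ω) atTop (𝓝 c) :=
    ae_all_iff.2 fun n =>
      (hS.supermartingale_localized n).exists_ae_tendsto_of_forall_le fun _ _ => hS.neg_le_localized
  filter_upwards [hconv] with ω hω hG
  obtain ⟨c, hc⟩ := hω ⌈∑' t, G t ω⌉₊
  refine tendsto_and_summable_of_tendsto_add_sum_sub (c := c) (hS.nonneg_Z · ω) (hS.nonneg_A · ω)
    hG ?_
  simpa only [localized_eq_of_tsum_le (hS.nonneg_G · ω) hG (Nat.le_ceil _)] using hc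

end IsAlmostSupermartingale

variable {f : ℕ → Ω → ℝ}

noncomputable def prodOneAdd (f : ℕ → Ω → ℝ) (t : ℕ) (ω : Ω) : ℝ :=
  ∏ s ∈ range t, (1 + f s ω)

lemma one_le_prodOneAdd (hf : ∀ s, 0 ≤ f s ω) : 1 ≤ prodOneAdd f t ω :=
  one_le_prod fun s _ => le_add_of_nonneg_right (hf s)

lemma prodOneAdd_succ : prodOneAdd f (t + 1) ω = prodOneAdd f t ω * (1 + f t ω) :=
  prod_range_succ _ _

lemma measurable_prodOneAdd (hf : Adapted ℱ f) {u : ℕ} (htu : t ≤ u + 1) :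
    Measurable[ℱ u] (prodOneAdd f t) :=
  Finset.measurable_prod _ fun s hs =>
    measurable_const.add (hf.measurable_le (by simp at hs; omega))

lemma exists_tendsto_prodOneAdd (hf : Summable fun s => f s ω) :
    ∃ p, Tendsto (prodOneAdd f · ω) atTop (𝓝 p) :=
  ⟨_, (Real.multipliable_one_add_of_summable hf).tendsto_prod_tprod_nat⟩

variable [IsFiniteMeasure μ] {z g h α : ℕ → Ω → ℝ}

lemma isAlmostSupermartingale_div_prodOneAdd (hz0 : ∀ t ω, 0 ≤ z t ω) (hf0 : ∀ t ω, 0 ≤ f t ω)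
    (hg0 : ∀ t ω, 0 ≤ g t ω) (hh0 : ∀ t ω, 0 ≤ h t ω) (hα0 : ∀ t ω, 0 ≤ α t ω)
    (hz : Adapted ℱ z) (hf : Adapted ℱ f) (hg : Adapted ℱ g) (hh : Adapted ℱ h)
    (hα : Adapted ℱ α) (hz_int : ∀ t, Integrable (z t) μ)
    (hrec : ∀ t, ∀ᵐ ω ∂μ,
      (μ[z (t + 1)|ℱ t]) ω ≤ (1 + f t ω) * z t ω + g t ω - α t ω * h t ω) :
    IsAlmostSupermartingale ℱ μ (fun t ω => z t ω / prodOneAdd f t ω)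
      (fun t ω => g t ω / prodOneAdd f (t + 1) ω)
      (fun t ω => α t ω * h t ω / prodOneAdd f (t + 1) ω) := by
  have hP : ∀ t ω, 1 ≤ prodOneAdd f t ω := fun t ω => one_le_prodOneAdd (hf0 · ω)
  have hP0 : ∀ t ω, 0 ≤ prodOneAdd f t ω := fun t ω => zero_le_one.trans (hP t ω)
  refine
    { nonneg_Z := fun t ω => div_nonneg (hz0 t ω) (hP0 t ω)
      nonneg_G := fun t ω => div_nonneg (hg0 t ω) (hP0 _ ω)
      nonneg_A := fun t ω => div_nonneg (mul_nonneg (hα0 t ω) (hh0 t ω)) (hP0 _ ω)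
      adapted_Z := fun t => (hz t).div (measurable_prodOneAdd hf t.le_succ)
      adapted_G := fun t => (hg t).div (measurable_prodOneAdd hf le_rfl)
      adapted_A := fun t => ((hα t).mul (hh t)).div (measurable_prodOneAdd hf le_rfl)
      integrable := fun t => (hz_int t).mono'
        (((hz t).div (measurable_prodOneAdd hf t.le_succ)).mono (ℱ.le t) le_rfl
          |>.aestronglyMeasurable)
        (ae_of_all _ fun ω => by
          rw [Real.norm_of_nonneg (div_nonneg (hz0 t ω) (hP0 t ω))]
          exact div_le_self (hz0 t ω) (hP t ω))
      condExp_le := fun t => ?_ }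
  have hdiv : (fun ω => z (t + 1) ω / prodOneAdd f (t + 1) ω) =
      (prodOneAdd f (t + 1))⁻¹ * z (t + 1) :=
    funext fun ω => div_eq_inv_mul _ _
  have hbound := condExp_mul_le_mul_of_bound (ℱ.le t)
    (measurable_prodOneAdd hf le_rfl).inv.stronglyMeasurable (fun ω => inv_nonneg.2 (hP0 _ ω))
    (fun ω => inv_le_one_of_one_le₀ (hP _ ω)) (hz_int (t + 1)) (hrec t)
  rw [hdiv]
  filter_upwards [hbound] with ω hω
  refine hω.trans_eq ?_
  have hPt := (zero_lt_one.trans_le (hP t ω)).ne'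
  have hft : 1 + f t ω ≠ 0 := by linarith [hf0 t ω]
  simp only [Pi.mul_apply, Pi.inv_apply, Pi.add_apply, Pi.sub_apply, prodOneAdd_succ]
  field_simp

theorem ae_tendsto_and_summable_of_condExp_le (hz0 : ∀ t ω, 0 ≤ z t ω)
    (hf0 : ∀ t ω, 0 ≤ f t ω) (hg0 : ∀ t ω, 0 ≤ g t ω) (hh0 : ∀ t ω, 0 ≤ h t ω)
    (hα0 : ∀ t ω, 0 ≤ α t ω) (hz : Adapted ℱ z) (hf : Adapted ℱ f) (hg : Adapted ℱ g)
    (hh : Adapted ℱ h) (hα : Adapted ℱ α) (hz_int : ∀ t, Integrable (z t) μ)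
    (hrec : ∀ t, ∀ᵐ ω ∂μ,
      (μ[z (t + 1)|ℱ t]) ω ≤ (1 + f t ω) * z t ω + g t ω - α t ω * h t ω) :
    ∀ᵐ ω ∂μ, Summable (fun t => f t ω) → Summable (fun t => g t ω) →
      (∃ l, Tendsto (fun t => z t ω) atTop (𝓝 l)) ∧ Summable fun t => α t ω * h t ω := by
  filter_upwards [(isAlmostSupermartingale_div_prodOneAdd hz0 hf0 hg0 hh0 hα0 hz hf hg hh hα
    hz_int hrec).ae_tendsto_and_summable] with ω hω hf_sum hg_sum
  have hP : ∀ t, 1 ≤ prodOneAdd f t ω := fun t => one_le_prodOneAdd (hf0 · ω)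
  have hP0 : ∀ t, 0 < prodOneAdd f t ω := fun t => zero_lt_one.trans_le (hP t)
  obtain ⟨⟨l, hl⟩, hA⟩ := hω <| hg_sum.of_nonneg_of_le
    (fun t => div_nonneg (hg0 t ω) (hP0 _).le) fun t => div_le_self (hg0 t ω) (hP _)
  obtain ⟨p, hp⟩ := exists_tendsto_prodOneAdd hf_sum
  obtain ⟨B, hB⟩ := hp.bddAbove_range
  refine ⟨⟨l * p, (hl.mul hp).congr fun t => div_mul_cancel₀ _ (hP0 t).ne'⟩,
    (hA.mul_right B).of_nonneg_of_le (fun t => mul_nonneg (hα0 t ω) (hh0 t ω)) fun t => ?_⟩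
  calc α t ω * h t ω = α t ω * h t ω / prodOneAdd f (t + 1) ω * prodOneAdd f (t + 1) ω :=
        (div_mul_cancel₀ _ (hP0 _).ne').symm
    _ ≤ α t ω * h t ω / prodOneAdd f (t + 1) ω * B :=
        mul_le_mul_of_nonneg_left (hB ⟨t + 1, rfl⟩)
          (div_nonneg (mul_nonneg (hα0 t ω) (hh0 t ω)) (hP0 _).le)

theorem ae_tendsto_and_summable_of_ae_nonneg (hz0 : ∀ t, ∀ᵐ ω ∂μ, 0 ≤ z t ω)
    (hf0 : ∀ t, ∀ᵐ ω ∂μ, 0 ≤ f t ω) (hg0 : ∀ t, ∀ᵐ ω ∂μ, 0 ≤ g t ω)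
    (hh0 : ∀ t, ∀ᵐ ω ∂μ, 0 ≤ h t ω) (hα0 : ∀ t, ∀ᵐ ω ∂μ, 0 ≤ α t ω)
    (hz : Adapted ℱ z) (hf : Adapted ℱ f) (hg : Adapted ℱ g)
    (hh : Adapted ℱ h) (hα : Adapted ℱ α) (hz_int : ∀ t, Integrable (z t) μ)
    (hrec : ∀ t, ∀ᵐ ω ∂μ,
      (μ[z (t + 1)|ℱ t]) ω ≤ (1 + f t ω) * z t ω + g t ω - α t ω * h t ω) :
    ∀ᵐ ω ∂μ, Summable (fun t => f t ω) → Summable (fun t => g t ω) →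
      (∃ l, Tendsto (fun t => z t ω) atTop (𝓝 l)) ∧ Summable fun t => α t ω * h t ω := by
  have hmax : ∀ {X : ℕ → Ω → ℝ}, (∀ t, ∀ᵐ ω ∂μ, 0 ≤ X t ω) →
      ∀ᵐ ω ∂μ, ∀ t, max (X t ω) 0 = X t ω :=
    fun hX => ae_all_iff.2 fun t => (hX t).mono fun _ => max_eq_left
  have hrec' : ∀ t, ∀ᵐ ω ∂μ, (μ[fun ω => max (z (t + 1) ω) 0|ℱ t]) ω ≤
      (1 + max (f t ω) 0) * max (z t ω) 0 + max (g t ω) 0 - max (α t ω) 0 * max (h t ω) 0 := by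
    intro t
    filter_upwards [hrec t, condExp_congr_ae (m := ℱ t) ((hmax hz0).mono fun _ h => h (t + 1)),
      hmax hz0, hmax hf0, hmax hg0, hmax hh0, hmax hα0] with ω hω hz' hz hf hg hh hα
    rw [hz']
    simpa only [hz, hf, hg, hh, hα] using hω
  filter_upwards [ae_tendsto_and_summable_of_condExp_le (z := fun t ω => max (z t ω) 0)
    (fun _ _ => le_max_right _ _) (fun _ _ => le_max_right _ _) (fun _ _ => le_max_right _ _)
    (fun _ _ => le_max_right _ _) (fun _ _ => le_max_right _ _)
    (fun t => (hz t).max measurable_const) (fun t => (hf t).max measurable_const)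
    (fun t => (hg t).max measurable_const) (fun t => (hh t).max measurable_const)
    (fun t => (hα t).max measurable_const) (fun t => (hz_int t).pos_part) hrec',
    hmax hz0, hmax hf0, hmax hg0, hmax hh0, hmax hα0] with ω hω hz hf hg hh hα
  simpa only [hz, hf, hg, hh, hα] using hω

end RobbinsSiegmund

/-- Theorem 4.2, items 1–2: under the almost-supermartingale recursion with
`Σ f_t < ∞` and `Σ g_t < ∞` a.s., `(z_t)` is bounded a.s. and converges a.s. to a
random variable `W`; if in addition `Σ α_t = ∞` a.s., then `liminf h_t = 0` a.s. -/
theorem sa_convergence_thm {Ω : Type*} {m0 : MeasurableSpace Ω}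
    {μ : Measure Ω} [IsProbabilityMeasure μ]
    (ℱ : Filtration ℕ m0)
    (z f g h α : ℕ → Ω → ℝ)
    (hz_nonneg : ∀ t, ∀ᵐ ω ∂μ, 0 ≤ z t ω)
    (hf_nonneg : ∀ t, ∀ᵐ ω ∂μ, 0 ≤ f t ω)
    (hg_nonneg : ∀ t, ∀ᵐ ω ∂μ, 0 ≤ g t ω)
    (hh_nonneg : ∀ t, ∀ᵐ ω ∂μ, 0 ≤ h t ω)
    (hα_nonneg : ∀ t, ∀ᵐ ω ∂μ, 0 ≤ α t ω)
    (hz_adapted : Adapted ℱ z) (hf_adapted : Adapted ℱ f)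
    (hg_adapted : Adapted ℱ g) (hh_adapted : Adapted ℱ h)
    (hα_adapted : Adapted ℱ α)
    (hz_int : ∀ t, Integrable (z t) μ)
    (hrec : ∀ t, ∀ᵐ ω ∂μ,
      (μ[z (t + 1)|ℱ t]) ω ≤ (1 + f t ω) * z t ω + g t ω - α t ω * h t ω)
    (hf_sum : ∀ᵐ ω ∂μ, Summable (fun t => f t ω))
    (hg_sum : ∀ᵐ ω ∂μ, Summable (fun t => g t ω)) :
    ((∀ᵐ ω ∂μ, ∃ C : ℝ, ∀ t, z t ω ≤ C) ∧
      ∃ W : Ω → ℝ, ∀ᵐ ω ∂μ, Tendsto (fun t => z t ω) atTop (nhds (W ω))) ∧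
    ((∀ᵐ ω ∂μ, ¬ Summable (fun t => α t ω)) →
      ∀ᵐ ω ∂μ, Filter.liminf (fun t => h t ω) atTop = 0) := by
  have hmain : ∀ᵐ ω ∂μ, (∃ l, Tendsto (fun t => z t ω) atTop (𝓝 l)) ∧
      Summable fun t => α t ω * h t ω := by
    filter_upwards [RobbinsSiegmund.ae_tendsto_and_summable_of_ae_nonneg hz_nonneg hf_nonneg
      hg_nonneg hh_nonneg hα_nonneg hz_adapted hf_adapted hg_adapted hh_adapted hα_adapted
      hz_int hrec, hf_sum, hg_sum] with ω hω hf hg using hω hf hg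
  refine ⟨⟨?_, fun ω => limUnder atTop (z · ω), ?_⟩, fun hα_div => ?_⟩
  · filter_upwards [hmain] with ω ⟨⟨l, hl⟩, _⟩
    obtain ⟨C, hC⟩ := hl.bddAbove_range
    exact ⟨C, fun t => hC ⟨t, rfl⟩⟩
  · filter_upwards [hmain] with ω ⟨⟨l, hl⟩, _⟩
    exact hl.limUnder_eq.symm ▸ hl
  · filter_upwards [hmain, hα_div, ae_all_iff.2 hα_nonneg, ae_all_iff.2 hh_nonneg]
      with ω ⟨_, hαh⟩ hα_div hα hh
    exact liminf_eq_zero_of_summable_mul hα hh hαh hα_div
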